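/- arXiv:2602.11947 — 5 statements merged into one kernel-verified Lean document; each statement's English description precedes it below -/
import Mathlib

section
/- Suppose binary variables δ_{j,t} ∈ {0,1} for j ∈ {1,…,K}, t ∈ {1,…,T} satisfy: (i) ∑_{j=1}^K δ_{j,t} = 1 for all t; (ii) δ_{j+1,t+1} ≤ δ_{j,t} + δ_{j+1,t} for all j ≤ K-1, t ≤ T-1; (iii) δ_{1,t+1} ≤ δ_{1,t} for all t ≤ T-1; (iv) δ_{K,t+1} ≥ δ_{K,t} for all t ≤ T-1. Then for each j, the set {t : δ_{j,t} = 1} is a contiguous interval of {1,…,T}. -/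
/-- Contiguity property of the Alternate segment-assignment block (B1) with binary
variables: constraints (i)–(iv) force each set `{t : δ j t = 1}` to be a contiguous
interval.  (0-based Lean indices.) -/
theorem alternate_block_contiguity (K T : ℕ) (hK : 1 ≤ K) (hT : 1 ≤ T)
    (δ : Fin K → Fin T → ℝ)
    (hbin : ∀ j t, δ j t = 0 ∨ δ j t = 1)
    (hsum : ∀ t, ∑ j, δ j t = 1)
    (hcontig : ∀ (j t : ℕ) (hj : j + 1 < K) (ht : t + 1 < T),
        δ ⟨j + 1, hj⟩ ⟨t + 1, ht⟩ ≤ δ ⟨j, by omega⟩ ⟨t, by omega⟩ + δ ⟨j + 1, hj⟩ ⟨t, by omega⟩)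
    (hfirst : ∀ (t : ℕ) (ht : t + 1 < T),
        δ ⟨0, by omega⟩ ⟨t + 1, ht⟩ ≤ δ ⟨0, by omega⟩ ⟨t, by omega⟩)
    (hlast : ∀ (t : ℕ) (ht : t + 1 < T),
        δ ⟨K - 1, by omega⟩ ⟨t, by omega⟩ ≤ δ ⟨K - 1, by omega⟩ ⟨t + 1, ht⟩) :
    ∀ (j : Fin K) (t₁ t₂ t₃ : Fin T), t₁ ≤ t₂ → t₂ ≤ t₃ →
        δ j t₁ = 1 → δ j t₃ = 1 → δ j t₂ = 1 := by
  classical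
  -- uniqueness of the active index
  have huniq : ∀ (t : Fin T) (j j' : Fin K), δ j t = 1 → δ j' t = 1 → j = j' := by
    intro t j j' hj hj'
    by_contra hne
    have hsub := Finset.sum_le_sum_of_subset_of_nonneg
      (Finset.subset_univ ({j, j'} : Finset (Fin K)))
      (fun i _ _ => by show (0:ℝ) ≤ δ i t; rcases hbin i t with h | h <;> rw [h] <;> norm_num)
    rw [Finset.sum_pair hne, hj, hj', hsum t] at hsub
    norm_num at hsub
  have hex : ∀ t : Fin T, ∃ j, δ j t = 1 := by
    intro t
    by_contra h
    push_neg at h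
    have h0 : ∑ j, δ j t = 0 :=
      Finset.sum_eq_zero (fun j _ => (hbin j t).resolve_right (h j))
    rw [hsum t] at h0
    norm_num at h0
  set f : Fin T → Fin K := fun t => (hex t).choose with hf
  have hfspec : ∀ t, δ (f t) t = 1 := fun t => (hex t).choose_spec
  -- one-step monotonicity of f
  have hstep : ∀ (t : ℕ) (ht : t + 1 < T),
      (f ⟨t, by omega⟩).val ≤ (f ⟨t + 1, ht⟩).val := by
    intro t ht
    rcases Nat.eq_zero_or_pos (f ⟨t + 1, ht⟩).val with h0 | hpos
    · -- active index at t+1 is 0, so by (iii) it is 0 at t as well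
      have hj1 : f ⟨t + 1, ht⟩ = ⟨0, by omega⟩ := Fin.ext h0
      have h1 : δ ⟨0, by omega⟩ ⟨t + 1, ht⟩ = 1 := hj1 ▸ hfspec ⟨t + 1, ht⟩
      have hle := hfirst t ht
      rw [h1] at hle
      have hδ : δ ⟨0, by omega⟩ ⟨t, by omega⟩ = 1 := by
        rcases hbin ⟨0, by omega⟩ ⟨t, by omega⟩ with h | h
        · rw [h] at hle; linarith
        · exact h
      have h2 : f ⟨t, by omega⟩ = ⟨0, by omega⟩ :=
        huniq _ _ _ (hfspec ⟨t, by omega⟩) hδ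
      simp [h2]
    · obtain ⟨j, hj⟩ : ∃ j, (f ⟨t + 1, ht⟩).val = j + 1 :=
        ⟨(f ⟨t + 1, ht⟩).val - 1, by omega⟩
      have hjK : j + 1 < K := hj ▸ (f ⟨t + 1, ht⟩).isLt
      have h1 : δ ⟨j + 1, hjK⟩ ⟨t + 1, ht⟩ = 1 := by
        have he : f ⟨t + 1, ht⟩ = ⟨j + 1, hjK⟩ := Fin.ext hj
        exact he ▸ hfspec ⟨t + 1, ht⟩
      have hc := hcontig j t hjK ht
      rw [h1] at hc
      rcases hbin ⟨j, by omega⟩ ⟨t, by omega⟩ with ha | ha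
      · rcases hbin ⟨j + 1, hjK⟩ ⟨t, by omega⟩ with hb | hb
        · rw [ha, hb] at hc; linarith
        · have h2 : f ⟨t, by omega⟩ = ⟨j + 1, hjK⟩ :=
            huniq _ _ _ (hfspec ⟨t, by omega⟩) hb
          simp [h2, hj]
      · have h2 : f ⟨t, by omega⟩ = ⟨j, by omega⟩ :=
          huniq _ _ _ (hfspec ⟨t, by omega⟩) ha
        simp [h2, hj]
  -- full monotonicity
  have hmono : ∀ (a b : ℕ) (ha : a < T) (hb : b < T), a ≤ b →
      (f ⟨a, ha⟩).val ≤ (f ⟨b, hb⟩).val := by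
    intro a b ha hb hab
    induction b with
    | zero =>
      have : a = 0 := by omega
      subst this; exact le_refl _
    | succ n ih =>
      rcases Nat.lt_or_ge a (n + 1) with h | h
      · have hn : n < T := by omega
        exact le_trans (ih hn (by omega)) (hstep n hb)
      · have : a = n + 1 := by omega
        subst this; exact le_refl _
  intro j t₁ t₂ t₃ h12 h23 h1 h3
  have e1 : f t₁ = j := huniq _ _ _ (hfspec t₁) h1
  have e3 : f t₃ = j := huniq _ _ _ (hfspec t₃) h3
  have m12 := hmono t₁.val t₂.val t₁.isLt t₂.isLt h12
  have m23 := hmono t₂.val t₃.val t₂.isLt t₃.isLt h23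
  simp only [Fin.eta] at m12 m23
  rw [e1] at m12; rw [e3] at m23
  have : f t₂ = j := Fin.ext (le_antisymm m23 m12)
  exact this ▸ hfspec t₂
end

section
/- For K = 4 and T = 6, the fractional point δ̃ given by δ̃₁ = (0.5,0.5,0.5,0,0,0), δ̃₂ = (0,0.5,0,0.5,0.5,0.5), δ̃₃ = (0.5,0,0.5,0,0,0), δ̃₄ = (0,0,0,0.5,0.5,0.5) is the unique solution of the following system of 24 linear equations in the 24 variables δ_{j,t}: the 6 assignment equalities ∑_j δ_{j,t} = 1; the equalities δ_{2,2} = δ_{1,1}+δ_{2,1}, δ_{2,4} = δ_{1,3}+δ_{2,3}, δ_{2,5} = δ_{1,4}+δ_{2,4}, δ_{2,6} = δ_{1,5}+δ_{2,5}, δ_{3,3} = δ_{2,2}+δ_{3,2}, δ_{4,4} = δ_{4,3}+δ_{3,3}; the equalities δ_{1,1}=δ_{1,2}, δ_{1,2}=δ_{1,3}, δ_{4,4}=δ_{4,5}, δ_{4,5}=δ_{4,6}; and the 8 bound equalities δ_{1,5}=0, δ_{1,6}=0, δ_{2,1}=0, δ_{2,3}=0, δ_{3,2}=0, δ_{3,5}=0,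 δ_{4,1}=0, δ_{4,3}=0. -/
private lemma cons_val_five {α} (x : α) (u : Fin 5 → α) :
    Matrix.vecCons x u 5 = u 4 := rfl

/-- Uniqueness of the solution of the 24 tight constraints (K = 4, T = 6): the listed
24 linear equations force δ to equal the fractional point δ̃.  (0-based Lean indices:
paper entry δ_{j,t} is `δ (j-1) (t-1)`.) -/
theorem tight_constraints_unique_solution (δ : Fin 4 → Fin 6 → ℝ)
    (hsum : ∀ t, ∑ j, δ j t = 1)
    (e1 : δ 1 1 = δ 0 0 + δ 1 0)
    (e2 : δ 1 3 = δ 0 2 + δ 1 2)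
    (e3 : δ 1 4 = δ 0 3 + δ 1 3)
    (e4 : δ 1 5 = δ 0 4 + δ 1 4)
    (e5 : δ 2 2 = δ 1 1 + δ 2 1)
    (e6 : δ 3 3 = δ 3 2 + δ 2 2)
    (b1 : δ 0 0 = δ 0 1)
    (b2 : δ 0 1 = δ 0 2)
    (b3 : δ 3 3 = δ 3 4)
    (b4 : δ 3 4 = δ 3 5)
    (z1 : δ 0 4 = 0) (z2 : δ 0 5 = 0) (z3 : δ 1 0 = 0) (z4 : δ 1 2 = 0)
    (z5 : δ 2 1 = 0) (z6 : δ 2 4 = 0) (z7 : δ 3 0 = 0) (z8 : δ 3 2 = 0) :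
    ∀ j t, δ j t =
      (!![0.5, 0.5, 0.5, 0, 0, 0;
          0, 0.5, 0, 0.5, 0.5, 0.5;
          0.5, 0, 0.5, 0, 0, 0;
          0, 0, 0, 0.5, 0.5, 0.5] : Matrix (Fin 4) (Fin 6) ℝ) j t := by
  have h0 := hsum 0
  have h1 := hsum 1
  have h2 := hsum 2
  have h3 := hsum 3
  have h4 := hsum 4
  have h5 := hsum 5
  simp [Fin.sum_univ_four] at h0 h1 h2 h3 h4 h5
  intro j t
  fin_cases j <;> fin_cases t <;>
    simp [cons_val_five, Matrix.cons_val_zero, Matrix.cons_val_one, Matrix.cons_val_two, Matrix.cons_val_three, Matrix.cons_val_four, Matrix.vecHead, Matrix.vecTail] <;> norm_num <;> linarith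
end

section
/- The polyhedron S defined by the LP relaxation of the Alternate segment-assignment block (B1) with K = 4 segments and T = 6 time points is not an integral polytope: it has a vertex with fractional coordinates. -/
/-!
The point with rows `(1,1,1,½,½,½)`, `(0,0,0,½,0,½)`, `(0,0,0,0,½,0)` and `0` lies in `S`.
At it fifteen nonnegativity constraints are tight, together with `δ₁₅ ≤ δ₀₄ + δ₁₄`,
`δ₂₄ ≤ δ₁₃ + δ₂₃`, `δ₀₄ ≤ δ₀₃` and `δ₀₅ ≤ δ₀₄` (0-based indices). With the column sums these
force `δ₀₃ = δ₀₄ = δ₀₅ = δ₁₅ = u` and `δ₁₃ = δ₂₄ = 1 - u`, and column 5 then gives `u = ½`.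
So the sum of the slacks of these constraints is a linear cost that is nonnegative on `S` and
vanishes only at this point, which is therefore an exposed point, hence a vertex.
-/

/-- The polyhedron of the LP relaxation of the Alternate segment-assignment block (B1)
with K = 4 segments and T = 6 time points.  (0-based Lean indices.) -/
def alternateB1Polyhedron : Set (Fin 4 → Fin 6 → ℝ) :=
  {δ | (∀ t, ∑ j, δ j t = 1) ∧
    (∀ (j t : ℕ) (hj : j + 1 < 4) (ht : t + 1 < 6),
        δ ⟨j + 1, hj⟩ ⟨t + 1, ht⟩ ≤ δ ⟨j, by omega⟩ ⟨t, by omega⟩ + δ ⟨j + 1, hj⟩ ⟨t, by omega⟩) ∧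
    (∀ (t : ℕ) (ht : t + 1 < 6),
        δ ⟨0, by omega⟩ ⟨t + 1, ht⟩ ≤ δ ⟨0, by omega⟩ ⟨t, by omega⟩) ∧
    (∀ (t : ℕ) (ht : t + 1 < 6),
        δ ⟨3, by omega⟩ ⟨t, by omega⟩ ≤ δ ⟨3, by omega⟩ ⟨t + 1, ht⟩) ∧
    (∀ j t, 0 ≤ δ j t ∧ δ j t ≤ 1)}

section WeightedSum

variable {ι κ : Type*} [Fintype ι] [Fintype κ]

def weightedSum (w : ι → κ → ℝ) : StrongDual ℝ (ι → κ → ℝ) :=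
  ∑ i, ∑ k, w i k • (ContinuousLinearMap.proj k : (κ → ℝ) →L[ℝ] ℝ).comp (ContinuousLinearMap.proj i)

theorem weightedSum_apply (w y : ι → κ → ℝ) : weightedSum w y = ∑ i, ∑ k, w i k * y i k := by
  simp [weightedSum]

end WeightedSum

theorem one_half_ne_intCast (n : ℤ) : (1 / 2 : ℝ) ≠ n := by
  intro h
  have : (2 * n : ℤ) = 1 := by exact_mod_cast (by linarith : (2 * n : ℝ) = 1)
  omega

namespace AlternateB1

noncomputable def halfVertex : Fin 4 → Fin 6 → ℝ :=
  ![![1, 1, 1, 1/2, 1/2, 1/2],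
    ![0, 0, 0, 1/2, 0,   1/2],
    ![0, 0, 0, 0,   1/2, 0],
    ![0, 0, 0, 0,   0,   0]]

def slackCost : Fin 4 → Fin 6 → ℝ :=
  ![![0, 0, 0, 1, 1,  -1],
    ![1, 1, 1, 1, 2,  -1],
    ![1, 1, 1, 2, -1, 1],
    ![1, 1, 1, 1, 1,  1]]

theorem halfVertex_mem : halfVertex ∈ alternateB1Polyhedron := by
  refine ⟨fun t ↦ ?_, fun j t hj ht ↦ ?_, fun t ht ↦ ?_, fun t ht ↦ ?_, fun j t ↦ ?_⟩
  · fin_cases t <;> simp [halfVertex, Fin.sum_univ_four] <;> norm_num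
  · obtain rfl | rfl | rfl : j = 0 ∨ j = 1 ∨ j = 2 := by omega
    all_goals obtain rfl | rfl | rfl | rfl | rfl : t = 0 ∨ t = 1 ∨ t = 2 ∨ t = 3 ∨ t = 4 := by omega
    all_goals norm_num [halfVertex]
  · obtain rfl | rfl | rfl | rfl | rfl : t = 0 ∨ t = 1 ∨ t = 2 ∨ t = 3 ∨ t = 4 := by omega
    all_goals norm_num [halfVertex]
  · obtain rfl | rfl | rfl | rfl | rfl : t = 0 ∨ t = 1 ∨ t = 2 ∨ t = 3 ∨ t = 4 := by omega
    all_goals simp [halfVertex]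
  · fin_cases j <;> fin_cases t <;> simp [halfVertex] <;> norm_num

theorem weightedSum_slackCost_eq (y : Fin 4 → Fin 6 → ℝ) :
    weightedSum slackCost y =
      (y 1 0 + y 1 1 + y 1 2 + y 1 4 + y 2 0 + y 2 1 + y 2 2 + y 2 3 + y 2 5 +
        y 3 0 + y 3 1 + y 3 2 + y 3 3 + y 3 4 + y 3 5) +
      (y 0 4 + y 1 4 - y 1 5) + (y 1 3 + y 2 3 - y 2 4) + (y 0 3 - y 0 4) + (y 0 4 - y 0 5) := by
  simp only [weightedSum_apply, slackCost, Fin.sum_univ_four, Fin.sum_univ_six, Matrix.cons_val]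
  ring

theorem tight_inequalities_of_mem {y : Fin 4 → Fin 6 → ℝ} (hy : y ∈ alternateB1Polyhedron) :
    y 1 5 ≤ y 0 4 + y 1 4 ∧ y 2 4 ≤ y 1 3 + y 2 3 ∧ y 0 4 ≤ y 0 3 ∧ y 0 5 ≤ y 0 4 := by
  obtain ⟨-, hstep, hfirst, -, -⟩ := hy
  exact ⟨hstep 0 4 (by omega) (by omega), hstep 1 3 (by omega) (by omega),
    hfirst 3 (by omega), hfirst 4 (by omega)⟩

theorem weightedSum_slackCost_nonneg {y : Fin 4 → Fin 6 → ℝ} (hy : y ∈ alternateB1Polyhedron) :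
    0 ≤ weightedSum slackCost y := by
  obtain ⟨h₁, h₂, h₃, h₄⟩ := tight_inequalities_of_mem hy
  have h0 := fun j t ↦ (hy.2.2.2.2 j t).1
  rw [weightedSum_slackCost_eq]
  linarith [h0 1 0, h0 1 1, h0 1 2, h0 1 4, h0 2 0, h0 2 1, h0 2 2, h0 2 3, h0 2 5,
    h0 3 0, h0 3 1, h0 3 2, h0 3 3, h0 3 4, h0 3 5]

theorem weightedSum_slackCost_halfVertex : weightedSum slackCost halfVertex = 0 := by
  rw [weightedSum_slackCost_eq]
  simp [halfVertex]

theorem eq_halfVertex_of_weightedSum_slackCost_le {y : Fin 4 → Fin 6 → ℝ}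
    (hy : y ∈ alternateB1Polyhedron) (hcost : weightedSum slackCost y ≤ 0) : y = halfVertex := by
  obtain ⟨h₁, h₂, h₃, h₄⟩ := tight_inequalities_of_mem hy
  have h0 := fun j t ↦ (hy.2.2.2.2 j t).1
  have hcol : ∀ t, y 0 t + y 1 t + y 2 t + y 3 t = 1 := by
    simpa only [Fin.sum_univ_four] using hy.1
  rw [weightedSum_slackCost_eq] at hcost
  funext j t
  fin_cases j <;> fin_cases t <;> simp [halfVertex] <;>
    linarith [h0 1 0, h0 1 1, h0 1 2, h0 1 4, h0 2 0, h0 2 1, h0 2 2, h0 2 3, h0 2 5,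
      h0 3 0, h0 3 1, h0 3 2, h0 3 3, h0 3 4, h0 3 5, hcol 0, hcol 1, hcol 2, hcol 3, hcol 4, hcol 5]

theorem halfVertex_mem_exposedPoints :
    halfVertex ∈ alternateB1Polyhedron.exposedPoints ℝ := by
  refine ⟨halfVertex_mem, -weightedSum slackCost, fun y hy ↦ ⟨?_, fun h ↦ ?_⟩⟩
  · simpa [weightedSum_slackCost_halfVertex] using weightedSum_slackCost_nonneg hy
  · exact eq_halfVertex_of_weightedSum_slackCost_le hy
      (by simpa [weightedSum_slackCost_halfVertex] using h)

end AlternateB1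

/-- The polyhedron (B1) for K = 4, T = 6 is not an integral polytope: it has a vertex
(extreme point) with a fractional coordinate. -/
theorem alternateB1_not_integral :
    ∃ δ ∈ Set.extremePoints ℝ alternateB1Polyhedron,
      ∃ (j : Fin 4) (t : Fin 6), ∀ n : ℤ, δ j t ≠ (n : ℝ) := by
  refine ⟨AlternateB1.halfVertex,
    exposedPoints_subset_extremePoints AlternateB1.halfVertex_mem_exposedPoints, 0, 3, fun n ↦ ?_⟩
  simpa [AlternateB1.halfVertex] using one_half_ne_intCast n
end

section
/- For K = 4 and T = 8, the fractional point δ̃₁ = (0.5,…,0.5), δ̃₂ = (0.4,0.1,0.4,0.1,0.4,0.1,0.4,0.1), δ̃₃ = (0.1,0.4,0.1,0.4,0.1,0.4,0.1,0.4), δ̃₄ = (0,…,0) satisfies ∑_{j=1}^4 δ̃_{j,t} = 1 and 0 ≤ δ̃_{j,t} ≤ 1 for all t, but cannot be written in the extended form: there do not exist values X̃_{j,t} ∈ [0,1] (j = 1,2,3) with X̃_{j,t} ≥ X̃_{j,t+1} and X̃_{j+1,t} ≥ X̃_{j,t} such that δ̃₁ = X̃₁, δ̃₂ = X̃₂ -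 X̃₁, δ̃₃ = X̃₃ - X̃₂, δ̃₄ = 1 - X̃₃. -/
/-- For K = 4, T = 8, the fractional point δ̃₁ = (0.5,…,0.5),
δ̃₂ = (0.4,0.1,…), δ̃₃ = (0.1,0.4,…), δ̃₄ = 0 sums to one with entries in `[0,1]`, but
cannot be represented via nested nonincreasing `[0,1]`-valued vectors X̃ in the extended
form.  (0-based Lean indices.) -/
theorem fractional_point_not_extended_representable (δ : Fin 4 → Fin 8 → ℝ)
    (hδ0 : ∀ t, δ 0 t = 0.5)
    (hδ1 : ∀ t : Fin 8, δ 1 t = if Even t.val then 0.4 else 0.1)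
    (hδ2 : ∀ t : Fin 8, δ 2 t = if Even t.val then 0.1 else 0.4)
    (hδ3 : ∀ t, δ 3 t = 0) :
    (∀ t, ∑ j, δ j t = 1) ∧
    (∀ j t, 0 ≤ δ j t ∧ δ j t ≤ 1) ∧
    ¬ ∃ X : Fin 3 → Fin 8 → ℝ,
        (∀ j t, X j t ∈ Set.Icc (0 : ℝ) 1) ∧
        (∀ j, Antitone (X j)) ∧
        (∀ t, Monotone (fun j => X j t)) ∧
        (∀ t, δ 0 t = X 0 t) ∧
        (∀ t, δ 1 t = X 1 t - X 0 t) ∧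
        (∀ t, δ 2 t = X 2 t - X 1 t) ∧
        (∀ t, δ 3 t = 1 - X 2 t) := by
  refine ⟨?_, ?_, ?_⟩
  · intro t
    rw [Fin.sum_univ_four, hδ0, hδ1, hδ2, hδ3]
    by_cases h : Even t.val <;> simp [h] <;> norm_num
  · intro j t
    fin_cases j
    · show 0 ≤ δ 0 t ∧ δ 0 t ≤ 1
      rw [hδ0]; norm_num
    · show 0 ≤ δ 1 t ∧ δ 1 t ≤ 1
      rw [hδ1]; split_ifs <;> norm_num
    · show 0 ≤ δ 2 t ∧ δ 2 t ≤ 1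
      rw [hδ2]; split_ifs <;> norm_num
    · show 0 ≤ δ 3 t ∧ δ 3 t ≤ 1
      rw [hδ3]; norm_num
  · rintro ⟨X, -, hanti, -, h0, h1, -, -⟩
    have e1 : X 1 (1 : Fin 8) = 0.6 := by
      have a := h1 1; have b := h0 1
      rw [hδ1] at a; rw [hδ0] at b; norm_num at a; linarith
    have e2 : X 1 (2 : Fin 8) = 0.9 := by
      have a := h1 2; have b := h0 2
      rw [hδ1] at a; rw [hδ0] at b; norm_num at a; linarith
    have := hanti 1 (show (1:Fin 8) ≤ 2 by decide)
    rw [e1, e2] at this; norm_num at this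
end

section
/- Let x₁ < x₂ < ⋯ < x_T be real numbers with T = 8 and consider the LP relaxation of the Basic breakpoint-localization constraints with big-M constants M_{2,t} = x_t - x₁ and M_{3,t} = x_T - x_t. The fractional assignment δ̃₁,t = 0.5 for all t, δ̃₂ alternating 0.4/0.1, δ̃₃ alternating 0.1/0.4, δ̃₄ = 0, together with breakpoints r₀ = x₁, r₁ = r₂ = r₃ = (x₁+x₈)/2, r₄ = x₈, satisfies all constraints: x_t ≤ r_j + M_{2,t}(1 - δ̃_{j,t}) and x_t ≥ r_{j-1} - M_{3,t}(1 - δ̃_{j,t}) for all j ∈ {1,…,4}, t ∈ {1,…,8}, with r₀ ≤ r₁ ≤ ⋯ ≤ r₄. -/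
/-- The fractional assignment (δ̃₁ ≡ 0.5, δ̃₂ alternating 0.4/0.1, δ̃₃ alternating
0.1/0.4, δ̃₄ ≡ 0), with breakpoints r₀ = x₁, r₁ = r₂ = r₃ = (x₁+x₈)/2, r₄ = x₈, is
feasible for the LP relaxation of the Basic breakpoint-localization constraints with
big-M constants M_{2,t} = x_t - x₁ and M_{3,t} = x_T - x_t.  (0-based Lean indices:
segment j ∈ {1,…,4} is `j : Fin 4`, with left endpoint `r j.castSucc` and right
endpoint `r j.succ`.) -/
theorem fractional_point_satisfies_breakpoint_localization
    (x : Fin 8 → ℝ) (hx : StrictMono x)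
    (δ : Fin 4 → Fin 8 → ℝ)
    (hδ0 : ∀ t, δ 0 t = 0.5)
    (hδ1 : ∀ t : Fin 8, δ 1 t = if Even t.val then 0.4 else 0.1)
    (hδ2 : ∀ t : Fin 8, δ 2 t = if Even t.val then 0.1 else 0.4)
    (hδ3 : ∀ t, δ 3 t = 0)
    (r : Fin 5 → ℝ)
    (hr : r = ![x 0, (x 0 + x 7) / 2, (x 0 + x 7) / 2, (x 0 + x 7) / 2, x 7]) :
    (∀ i j : Fin 5, i ≤ j → r i ≤ r j) ∧
    (∀ (j : Fin 4) (t : Fin 8),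
        x t ≤ r j.succ + (x t - x 0) * (1 - δ j t) ∧
        r j.castSucc - (x 7 - x t) * (1 - δ j t) ≤ x t) := by
  have h07 : x 0 ≤ x 7 := hx.monotone (by decide)
  constructor
  · intro i j hij
    fin_cases i <;> fin_cases j <;> simp_all [hr] <;> first | rfl | linarith
  · intro j t
    have h0 : x 0 ≤ x t := hx.monotone t.zero_le
    have h7 : x t ≤ x 7 := hx.monotone (Fin.le_last t)
    subst hr
    fin_cases j
    · refine ⟨?_, ?_⟩
      · show x t ≤ (x 0 + x 7) / 2 + (x t - x 0) * (1 - δ 0 t)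
        rw [hδ0 t]; norm_num; linarith
      · show x 0 - (x 7 - x t) * (1 - δ 0 t) ≤ x t
        rw [hδ0 t]; norm_num; linarith
    · refine ⟨?_, ?_⟩
      · show x t ≤ (x 0 + x 7) / 2 + (x t - x 0) * (1 - δ 1 t)
        rw [hδ1 t]
        rcases Nat.even_or_odd t.val with h | h
        · rw [if_pos h]; norm_num; linarith
        · rw [if_neg (Nat.not_even_iff_odd.mpr h)]; norm_num; linarith
      · show (x 0 + x 7) / 2 - (x 7 - x t) * (1 - δ 1 t) ≤ x t
        rw [hδ1 t]
        rcases Nat.even_or_odd t.val with h | h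
        · rw [if_pos h]; norm_num; linarith
        · rw [if_neg (Nat.not_even_iff_odd.mpr h)]; norm_num; linarith
    · refine ⟨?_, ?_⟩
      · show x t ≤ (x 0 + x 7) / 2 + (x t - x 0) * (1 - δ 2 t)
        rw [hδ2 t]
        rcases Nat.even_or_odd t.val with h | h
        · rw [if_pos h]; norm_num; linarith
        · rw [if_neg (Nat.not_even_iff_odd.mpr h)]; norm_num; linarith
      · show (x 0 + x 7) / 2 - (x 7 - x t) * (1 - δ 2 t) ≤ x t
        rw [hδ2 t]
        rcases Nat.even_or_odd t.val with h | h
        · rw [if_pos h]; norm_num; linarith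
        · rw [if_neg (Nat.not_even_iff_odd.mpr h)]; norm_num; linarith
    · refine ⟨?_, ?_⟩
      · show x t ≤ x 7 + (x t - x 0) * (1 - δ 3 t)
        rw [hδ3 t]; norm_num; linarith
      · show (x 0 + x 7) / 2 - (x 7 - x t) * (1 - δ 3 t) ≤ x t
        rw [hδ3 t]; norm_num; linarith
end
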